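/- With the notation of the Kraus-reduction construction: for any L ∈ B(H), the reduced dissipator satisfies R ∘ D_L ∘ J = Σ_{Ľ ∈ X(L)} D_{Ľ}, where D_C(ρ) = CρC* − ½{C*C, ρ}. In particular, the restriction of a GKLS (Lindblad) generator onto a unital *-subalgebra via the CPTP factors of the orthogonal conditional expectation is again a GKLS generator. -/

import Mathlib

/-! STATEMENT 6: the reduced dissipator satisfies R ∘ D_L ∘ J = Σ_{Ľ ∈ X(L)} D_Ľ, and the
restriction of a GKLS generator via the CPTP factors of the orthogonal conditional
expectation is again a GKLS generator. -/

open Matrix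
open scoped Kronecker BigOperators

noncomputable section

abbrev Mat (n : ℕ) : Type := Matrix (Fin n) (Fin n) ℂ

/-- Partial trace over the second tensor factor. -/
def ptrG {a b : ℕ} (M : Matrix (Fin a × Fin b) (Fin a × Fin b) ℂ) :
    Matrix (Fin a) (Fin a) ℂ :=
  Matrix.of fun i j => ∑ g : Fin b, M (i, g) (j, g)

variable {K n m : ℕ} {dF dG : Fin K → ℕ}

/-- The reduction map `R : B(H) → Ǎ`, `R(X) = ⊕ₖ tr_{G,k}(Vₖ* X Vₖ)`. -/
def Rmap (V : ∀ k : Fin K, Matrix (Fin n) (Fin (dF k) × Fin (dG k)) ℂ)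
    (W : ∀ k : Fin K, Matrix (Fin m) (Fin (dF k)) ℂ) (X : Mat n) : Mat m :=
  ∑ k : Fin K, W k * ptrG ((V k)ᴴ * X * V k) * (W k)ᴴ

/-- The injection map `J : Ǎ → B(H)`, `J(ρ̌) = ⊕ₖ ρ̌ₖ ⊗ 1_{G,k}/dim H_{G,k}`. -/
def Jmap (V : ∀ k : Fin K, Matrix (Fin n) (Fin (dF k) × Fin (dG k)) ℂ)
    (W : ∀ k : Fin K, Matrix (Fin m) (Fin (dF k)) ℂ) (ρ : Mat m) : Mat n :=
  ∑ k : Fin K, V k *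
    (((W k)ᴴ * ρ * W k) ⊗ₖ (((dG k : ℂ))⁻¹ • (1 : Matrix (Fin (dG k)) (Fin (dG k)) ℂ))) *
    (V k)ᴴ

/-- The Hilbert–Schmidt adjoint of `J`, `J*(X) = ⊕ₖ tr_{G,k}(Vₖ* X Vₖ)/dim H_{G,k}`. -/
def Jstar (V : ∀ k : Fin K, Matrix (Fin n) (Fin (dF k) × Fin (dG k)) ℂ)
    (W : ∀ k : Fin K, Matrix (Fin m) (Fin (dF k)) ℂ) (X : Mat n) : Mat m :=
  ∑ k : Fin K, ((dG k : ℂ))⁻¹ • (W k * ptrG ((V k)ᴴ * X * V k) * (W k)ᴴ)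

/-- Membership in the reduced algebra `Ǎ = ⊕ₖ B(H_{F,k})`: block-diagonal matrices. -/
def IsBlockDiag (W : ∀ k : Fin K, Matrix (Fin m) (Fin (dF k)) ℂ) (ρ : Mat m) : Prop :=
  ρ = ∑ k : Fin K, (W k * (W k)ᴴ) * ρ * (W k * (W k)ᴴ)

/-- The reduced Kraus operators `Ľ_{ℓ,e}`. -/
def redKraus (dG : Fin K → ℕ) (W : ∀ k : Fin K, Matrix (Fin m) (Fin (dF k)) ℂ)
    {d : ℕ} (LF : ∀ j k : Fin K, Fin d → Matrix (Fin (dF j)) (Fin (dF k)) ℂ)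
    (ℓ : Fin d) (e : ℤ) : Mat m :=
  ∑ j : Fin K, ∑ k : Fin K,
    if ((k : ℤ) - (j : ℤ) = e) then
      ((Real.sqrt (dG k) : ℂ))⁻¹ • (W j * LF j k ℓ * (W k)ᴴ)
    else 0

/-- The dissipator `D_L(ρ) = LρL* − ½{L*L, ρ}`. -/
def dissip {p : ℕ} (L ρ : Mat p) : Mat p :=
  L * ρ * Lᴴ - (2⁻¹ : ℂ) • ((Lᴴ * L) * ρ + ρ * (Lᴴ * L))

/-- A GKLS (Lindblad) generator with Hamiltonian `H₀` and noise operators `Ls`. -/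
def gkls {p M : ℕ} (H₀ : Mat p) (Ls : Fin M → Mat p) (ρ : Mat p) : Mat p :=
  (-Complex.I) • (H₀ * ρ - ρ * H₀) + ∑ j : Fin M, dissip (Ls j) ρ

/-!
Write `ρₖ = Wₖᴴ ρ Wₖ` for the blocks of `ρ`. For block-diagonal `ρ` the reduction satisfies
`R(X J(ρ)) = J*(X) ρ` and `R(J(ρ) X) = ρ J*(X)`, so `R ∘ D_C ∘ J = ∑ᵢ D_{Kᵢ}` as soon as
`R(C J(ρ) Cᴴ) = ∑ᵢ Kᵢ ρ Kᵢᴴ` and `∑ᵢ Kᵢᴴ Kᵢ = J*(Cᴴ C)`.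

For `C = L`, orthonormality of the `G`-factors of the operator-Schmidt decomposition collapses
the partial traces, and both identities reduce to sums over pairs of blocks `(j, k)`. The reduced
Kraus operator `Ľ_{ℓ,e}` only maps block `k` to block `j` with `k - j = e`, so for fixed `e` no
two of its pieces share a source or a target block: the cross terms in `Ľ ρ Ľᴴ` and `Ľᴴ Ľ`
vanish, and summing over `e` recovers every pair `(j, k)` exactly once.

For an arbitrary `C`, the products `Aₓ C B_y` of Kraus operators of `R = ∑ Aₓ · Aₓᴴ` and
`J = ∑ B_y · B_yᴴ` serve as the `Kᵢ`, because `∑ Aₓᴴ Aₓ = 1`; with the Hermitian `J*(H₀)` as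
Hamiltonian they present the reduced GKLS generator.
-/

section PartialTrace

variable {a b : ℕ}

lemma ptrG_smul (c : ℂ) (M : Matrix (Fin a × Fin b) (Fin a × Fin b) ℂ) :
    ptrG (c • M) = c • ptrG M := by
  ext i j
  simp [ptrG, Finset.mul_sum]

lemma ptrG_sum {ι : Type*} (s : Finset ι) (M : ι → Matrix (Fin a × Fin b) (Fin a × Fin b) ℂ) :
    ptrG (∑ i ∈ s, M i) = ∑ i ∈ s, ptrG (M i) := by
  ext i j
  simp only [ptrG, Matrix.of_apply, Matrix.sum_apply]
  exact Finset.sum_comm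

lemma ptrG_kronecker (A : Matrix (Fin a) (Fin a) ℂ) (B : Matrix (Fin b) (Fin b) ℂ) :
    ptrG (A ⊗ₖ B) = B.trace • A := by
  ext i j
  simp [ptrG, Matrix.trace, Finset.mul_sum, mul_comm]

lemma ptrG_mul_kronecker_one (M : Matrix (Fin a × Fin b) (Fin a × Fin b) ℂ)
    (A : Matrix (Fin a) (Fin a) ℂ) :
    ptrG (M * (A ⊗ₖ (1 : Matrix (Fin b) (Fin b) ℂ))) = ptrG M * A := by
  ext i j
  simp only [ptrG, Matrix.of_apply, Matrix.mul_apply, Matrix.kroneckerMap_apply,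
    Matrix.one_apply, mul_ite, mul_one, mul_zero, Fintype.sum_prod_type, Finset.sum_mul]
  rw [Finset.sum_comm]
  simp

lemma ptrG_kronecker_one_mul (A : Matrix (Fin a) (Fin a) ℂ)
    (M : Matrix (Fin a × Fin b) (Fin a × Fin b) ℂ) :
    ptrG ((A ⊗ₖ (1 : Matrix (Fin b) (Fin b) ℂ)) * M) = A * ptrG M := by
  ext i j
  simp only [ptrG, Matrix.of_apply, Matrix.mul_apply, Matrix.kroneckerMap_apply,
    Matrix.one_apply, Fintype.sum_prod_type, Finset.mul_sum]
  rw [Finset.sum_comm]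
  simp

/-- The isometry `v ↦ v ⊗ e_g` of `ℂᵃ` into `ℂᵃ ⊗ ℂᵇ`. -/
def kronUnit (a : ℕ) (g : Fin b) : Matrix (Fin a × Fin b) (Fin a) ℂ :=
  Matrix.of fun p f => if p = (f, g) then 1 else 0

lemma ptrG_eq_sum_kronUnit (M : Matrix (Fin a × Fin b) (Fin a × Fin b) ℂ) :
    ptrG M = ∑ g : Fin b, (kronUnit a g)ᴴ * M * kronUnit a g := by
  ext i j
  simp [ptrG, Matrix.sum_apply, Matrix.mul_apply, kronUnit, Matrix.conjTranspose_apply]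

lemma kronecker_one_eq_sum_kronUnit (A : Matrix (Fin a) (Fin a) ℂ) :
    A ⊗ₖ (1 : Matrix (Fin b) (Fin b) ℂ) = ∑ g : Fin b, kronUnit a g * A * (kronUnit a g)ᴴ := by
  ext ⟨f, g⟩ ⟨f', g'⟩
  rcases eq_or_ne g g' with rfl | hg
  · simp [Matrix.sum_apply, Matrix.mul_apply, kronUnit, Matrix.conjTranspose_apply, ite_and]
  · simp [Matrix.sum_apply, Matrix.mul_apply, kronUnit, Matrix.conjTranspose_apply, ite_and, hg,
      hg.symm]

lemma sum_kronUnit_mul_conjTranspose :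
    ∑ g : Fin b, kronUnit a g * (kronUnit a g)ᴴ =
      (1 : Matrix (Fin a × Fin b) (Fin a × Fin b) ℂ) := by
  simpa [Matrix.one_kronecker_one] using
    (kronecker_one_eq_sum_kronUnit (b := b) (1 : Matrix (Fin a) (Fin a) ℂ)).symm

end PartialTrace

namespace Matrix

variable {ι α β γ : Type*} [Fintype β]

lemma mul_ite_zero (P : Prop) [Decidable P] (A : Matrix α β ℂ) (B : Matrix β γ ℂ) :
    A * (if P then B else 0) = if P then A * B else 0 := by
  split_ifs <;> simp

lemma sum_ite_mul_sum_ite [Fintype ι] {q : ι → Prop} [DecidablePred q]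
    (hq : ∀ i i', q i → q i' → i = i') (x : ι → Matrix α β ℂ) (y : ι → Matrix β γ ℂ) :
    (∑ i, if q i then x i else 0) * (∑ i, if q i then y i else 0) =
      ∑ i, if q i then x i * y i else 0 := by
  by_cases h : ∃ i, q i
  · obtain ⟨i, hi⟩ := h
    have hfilter : Finset.univ.filter q = {i} := by
      ext j
      simpa using ⟨fun hj => hq j i hj hi, fun hj => hj ▸ hi⟩
    simp only [← Finset.sum_filter, hfilter, Finset.sum_singleton]
  · simp only [not_exists] at h
    simp [h]

end Matrix

structure OrthogonalIsometries {r ι : Type*} {κ : ι → Type*} [Fintype r] [∀ i, DecidableEq (κ i)]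
    (U : ∀ i, Matrix r (κ i) ℂ) : Prop where
  isometry : ∀ i, (U i)ᴴ * U i = 1
  orthogonal : ∀ i j, i ≠ j → (U i)ᴴ * U j = 0

namespace OrthogonalIsometries

variable {r ι : Type*} {κ : ι → Type*} [Fintype r] [∀ i, Fintype (κ i)] [∀ i, DecidableEq (κ i)]
  {U : ∀ i, Matrix r (κ i) ℂ}

lemma conjTranspose_mul_mul_self {s : Type*} (hU : OrthogonalIsometries U) (i : ι)
    (M : Matrix (κ i) s ℂ) : (U i)ᴴ * (U i * M) = M := by
  rw [← Matrix.mul_assoc, hU.isometry, Matrix.one_mul]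

lemma conjTranspose_mul_mul_of_ne {s : Type*} (hU : OrthogonalIsometries U) {i j : ι}
    (hij : i ≠ j) (M : Matrix (κ j) s ℂ) : (U i)ᴴ * (U j * M) = 0 := by
  rw [← Matrix.mul_assoc, hU.orthogonal i j hij, Matrix.zero_mul]

variable [Fintype ι]

lemma sum_conj_mul (hU : OrthogonalIsometries U) (X : ∀ i, Matrix (κ i) (κ i) ℂ) (k : ι) :
    (∑ i, U i * X i * (U i)ᴴ) * U k = U k * X k := by
  rw [Matrix.sum_mul, Finset.sum_eq_single k]
  · rw [Matrix.mul_assoc, hU.isometry, Matrix.mul_one]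
  · intro i _ hi
    rw [Matrix.mul_assoc, hU.orthogonal i k hi, Matrix.mul_zero]
  · simp

lemma conjTranspose_mul_sum_conj (hU : OrthogonalIsometries U) (X : ∀ i, Matrix (κ i) (κ i) ℂ)
    (k : ι) : (U k)ᴴ * (∑ i, U i * X i * (U i)ᴴ) = X k * (U k)ᴴ := by
  rw [Matrix.mul_sum, Finset.sum_eq_single k]
  · simp only [Matrix.mul_assoc, hU.conjTranspose_mul_mul_self]
  · intro i _ hi
    simp only [Matrix.mul_assoc, hU.conjTranspose_mul_mul_of_ne hi.symm]
  · simp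

lemma conjTranspose_mul_sum_sum_mul (hU : OrthogonalIsometries U)
    (X : ∀ i j, Matrix (κ i) (κ j) ℂ) (j k : ι) :
    (U j)ᴴ * (∑ i, ∑ i', U i * X i i' * (U i')ᴴ) * U k = X j k := by
  simp only [Matrix.mul_sum, Matrix.sum_mul]
  rw [Finset.sum_eq_single j, Finset.sum_eq_single k]
  · simp only [Matrix.mul_assoc, hU.conjTranspose_mul_mul_self, hU.isometry, Matrix.mul_one]
  · intro i' _ hi'
    simp only [Matrix.mul_assoc, hU.orthogonal i' k hi', Matrix.mul_zero]
  · simp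
  · intro i _ hi
    refine Finset.sum_eq_zero fun i' _ => ?_
    simp only [Matrix.mul_assoc, hU.conjTranspose_mul_mul_of_ne hi.symm, Matrix.zero_mul]
  · simp

lemma conjTranspose_sum_mul_sum {s : Type*} (hU : OrthogonalIsometries U)
    (A : ∀ i, Matrix (κ i) s ℂ) :
    (∑ i, U i * A i)ᴴ * (∑ i, U i * A i) = ∑ i, (A i)ᴴ * A i := by
  simp only [Matrix.conjTranspose_sum, Matrix.conjTranspose_mul, Matrix.sum_mul, Matrix.mul_sum]
  refine Finset.sum_congr rfl fun i _ => ?_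
  rw [Finset.sum_eq_single i]
  · simp only [Matrix.mul_assoc, hU.conjTranspose_mul_mul_self]
  · intro i' _ hi'
    simp only [Matrix.mul_assoc, hU.conjTranspose_mul_mul_of_ne hi', Matrix.mul_zero]
  · simp

variable {p : ι → ι → Prop} [DecidableRel p]

lemma sum_ite_conj_mul_sum_conj_mul_conjTranspose (hU : OrthogonalIsometries U)
    (hp : ∀ i i' k, p i k → p i' k → i = i') (Y : ∀ i j, Matrix (κ i) (κ j) ℂ)
    (R : ∀ k, Matrix (κ k) (κ k) ℂ) :
    (∑ i, ∑ j, if p i j then U i * Y i j * (U j)ᴴ else 0) * (∑ k, U k * R k * (U k)ᴴ) *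
        (∑ i, ∑ j, if p i j then U i * Y i j * (U j)ᴴ else 0)ᴴ =
      ∑ i, ∑ j, if p i j then U i * (Y i j * R j * (Y i j)ᴴ) * (U i)ᴴ else 0 := by
  set S := ∑ i, ∑ j, if p i j then U i * Y i j * (U j)ᴴ else 0
  have hSU : ∀ k, S * U k = ∑ i, if p i k then U i * Y i k else 0 := by
    intro k
    simp only [S, Matrix.sum_mul]
    refine Finset.sum_congr rfl fun i _ => ?_
    rw [Finset.sum_eq_single k]
    · split_ifs <;> simp [Matrix.mul_assoc, hU.isometry]
    · intro j _ hj
      split_ifs <;> simp [Matrix.mul_assoc, hU.orthogonal j k hj]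
    · simp
  calc S * (∑ k, U k * R k * (U k)ᴴ) * Sᴴ = ∑ k, S * U k * (R k * (S * U k)ᴴ) := by
        simp only [Matrix.mul_sum, Matrix.sum_mul, Matrix.conjTranspose_mul, Matrix.mul_assoc]
    _ = ∑ k, ∑ i, if p i k then U i * Y i k * (R k * (U i * Y i k)ᴴ) else 0 := by
        refine Finset.sum_congr rfl fun k _ => ?_
        simp only [hSU, Matrix.conjTranspose_sum, apply_ite Matrix.conjTranspose,
          Matrix.conjTranspose_zero]
        rw [Matrix.mul_sum]
        simp only [Matrix.mul_ite_zero]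
        exact Matrix.sum_ite_mul_sum_ite (fun i i' => hp i i' k) _ _
    _ = _ := by
        rw [Finset.sum_comm]
        simp only [Matrix.conjTranspose_mul, Matrix.mul_assoc]

lemma conjTranspose_sum_ite_conj_mul_self (hU : OrthogonalIsometries U)
    (hp : ∀ i j j', p i j → p i j' → j = j') (Y : ∀ i j, Matrix (κ i) (κ j) ℂ) :
    (∑ i, ∑ j, if p i j then U i * Y i j * (U j)ᴴ else 0)ᴴ *
        (∑ i, ∑ j, if p i j then U i * Y i j * (U j)ᴴ else 0) =
      ∑ i, ∑ j, if p i j then U j * ((Y i j)ᴴ * Y i j) * (U j)ᴴ else 0 := by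
  have hS : (∑ i, ∑ j, if p i j then U i * Y i j * (U j)ᴴ else 0) =
      ∑ i, U i * ∑ j, if p i j then Y i j * (U j)ᴴ else 0 := by
    simp only [Matrix.mul_sum, Matrix.mul_ite_zero, Matrix.mul_assoc]
  rw [hS, hU.conjTranspose_sum_mul_sum]
  refine Finset.sum_congr rfl fun i _ => ?_
  simp only [Matrix.conjTranspose_sum, apply_ite Matrix.conjTranspose, Matrix.conjTranspose_zero]
  rw [Matrix.sum_ite_mul_sum_ite (hp i)]
  simp only [Matrix.conjTranspose_mul, Matrix.conjTranspose_conjTranspose, Matrix.mul_assoc]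

end OrthogonalIsometries

/-- `∑ ℓ, A ℓ ⊗ₖ G ℓ` is an operator-Schmidt decomposition whose `G`-factors are
Hilbert–Schmidt orthonormal, padded with terms `A ℓ ⊗ₖ 0` that have `A ℓ = 0`. -/
structure IsSchmidtFamily {ι α α' β β' : Type*} [Fintype β] [Fintype β']
    (A : ι → Matrix α α' ℂ) (G : ι → Matrix β β' ℂ) : Prop where
  orthogonal : ∀ ℓ f, ℓ ≠ f → ((G ℓ)ᴴ * G f).trace = 0
  normalized : ∀ ℓ, G ℓ ≠ 0 → ((G ℓ)ᴴ * G ℓ).trace = 1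
  eq_zero_of_eq_zero : ∀ ℓ, G ℓ = 0 → A ℓ = 0

namespace IsSchmidtFamily

variable {ι : Type*} [Fintype ι]

lemma sum_sum_trace_smul {α α' β β' : Type*} [Fintype β] [Fintype β'] {A : ι → Matrix α α' ℂ}
    {G : ι → Matrix β β' ℂ} (h : IsSchmidtFamily A G) {M : Type*} [AddCommMonoid M]
    [Module ℂ M] (Φ : ι → ι → M) (hΦ : ∀ ℓ, A ℓ = 0 → Φ ℓ ℓ = 0) :
    ∑ ℓ, ∑ f, ((G ℓ)ᴴ * G f).trace • Φ ℓ f = ∑ ℓ, Φ ℓ ℓ := by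
  refine Finset.sum_congr rfl fun ℓ _ => ?_
  rw [Finset.sum_eq_single ℓ]
  · by_cases hG : G ℓ = 0
    · simp [hG, hΦ ℓ (h.eq_zero_of_eq_zero ℓ hG)]
    · rw [h.normalized ℓ hG, one_smul]
  · intro f _ hf
    rw [h.orthogonal ℓ f hf.symm, zero_smul]
  · simp

variable {a a' b b' : ℕ}

lemma ptrG_conjTranspose_mul_self {A : ι → Matrix (Fin a') (Fin a) ℂ}
    {G : ι → Matrix (Fin b') (Fin b) ℂ} (h : IsSchmidtFamily A G) :
    ptrG ((∑ ℓ, A ℓ ⊗ₖ G ℓ)ᴴ * ∑ ℓ, A ℓ ⊗ₖ G ℓ) = ∑ ℓ, (A ℓ)ᴴ * A ℓ := by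
  simp only [Matrix.conjTranspose_sum, Matrix.conjTranspose_kronecker, Matrix.sum_mul,
    Matrix.mul_sum, ← Matrix.mul_kronecker_mul, ptrG_sum, ptrG_kronecker]
  rw [Finset.sum_comm]
  exact h.sum_sum_trace_smul (fun ℓ f => (A ℓ)ᴴ * A f) fun ℓ hA => by simp [hA]

lemma ptrG_mul_kronecker_one_mul_conjTranspose {A : ι → Matrix (Fin a) (Fin a') ℂ}
    {G : ι → Matrix (Fin b) (Fin b') ℂ} (h : IsSchmidtFamily A G) (X : Matrix (Fin a') (Fin a') ℂ) :
    ptrG ((∑ ℓ, A ℓ ⊗ₖ G ℓ) * (X ⊗ₖ (1 : Matrix (Fin b') (Fin b') ℂ)) *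
        (∑ ℓ, A ℓ ⊗ₖ G ℓ)ᴴ) = ∑ ℓ, A ℓ * X * (A ℓ)ᴴ := by
  simp only [Matrix.conjTranspose_sum, Matrix.conjTranspose_kronecker, Matrix.sum_mul,
    Matrix.mul_sum, ← Matrix.mul_kronecker_mul, Matrix.mul_one, ptrG_sum, ptrG_kronecker]
  simp_rw [Matrix.trace_mul_comm (G _)]
  exact h.sum_sum_trace_smul (fun f ℓ => A ℓ * X * (A f)ᴴ) fun ℓ hA => by simp [hA]

end IsSchmidtFamily

section BlockDiag

variable {W : ∀ k : Fin K, Matrix (Fin m) (Fin (dF k)) ℂ} {ρ : Mat m}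

lemma IsBlockDiag.eq_sum_blocks (h : IsBlockDiag W ρ) :
    ρ = ∑ k, W k * ((W k)ᴴ * ρ * W k) * (W k)ᴴ := by
  conv_lhs => rw [h]
  simp only [Matrix.mul_assoc]

lemma IsBlockDiag.conjTranspose_mul (hW : OrthogonalIsometries W) (h : IsBlockDiag W ρ)
    (k : Fin K) : (W k)ᴴ * ρ = ((W k)ᴴ * ρ * W k) * (W k)ᴴ := by
  conv_lhs => rw [h.eq_sum_blocks]
  exact hW.conjTranspose_mul_sum_conj _ k

lemma IsBlockDiag.mul_eq (hW : OrthogonalIsometries W) (h : IsBlockDiag W ρ) (k : Fin K) :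
    ρ * W k = W k * ((W k)ᴴ * ρ * W k) := by
  conv_lhs => rw [h.eq_sum_blocks]
  exact hW.sum_conj_mul _ k

end BlockDiag

lemma ofReal_sqrt_inv_mul_self (d : ℕ) :
    ((Real.sqrt d : ℂ))⁻¹ * ((Real.sqrt d : ℂ))⁻¹ = (d : ℂ)⁻¹ := by
  rw [← mul_inv, ← Complex.ofReal_mul, Real.mul_self_sqrt (Nat.cast_nonneg d)]
  norm_num

section Reduction

variable {V : ∀ k : Fin K, Matrix (Fin n) (Fin (dF k) × Fin (dG k)) ℂ}
  {W : ∀ k : Fin K, Matrix (Fin m) (Fin (dF k)) ℂ}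

lemma Rmap_mul_Jmap (hV : OrthogonalIsometries V) (hW : OrthogonalIsometries W) {ρ : Mat m}
    (hρ : IsBlockDiag W ρ) (X : Mat n) : Rmap V W (X * Jmap V W ρ) = Jstar V W X * ρ := by
  rw [Rmap, Jstar, Matrix.sum_mul]
  refine Finset.sum_congr rfl fun k _ => ?_
  have hJ : (V k)ᴴ * (X * Jmap V W ρ) * V k = ((dG k : ℂ))⁻¹ •
      ((V k)ᴴ * X * V k * (((W k)ᴴ * ρ * W k) ⊗ₖ (1 : Matrix (Fin (dG k)) (Fin (dG k)) ℂ))) := by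
    rw [Jmap, Matrix.mul_assoc, Matrix.mul_assoc, hV.sum_conj_mul, Matrix.kronecker_smul]
    simp only [Matrix.mul_assoc, Matrix.mul_smul]
  rw [hJ, ptrG_smul, ptrG_mul_kronecker_one, Matrix.mul_smul, Matrix.smul_mul, Matrix.smul_mul,
    Matrix.mul_assoc (W k), Matrix.mul_assoc (ptrG _), ← hρ.conjTranspose_mul hW]
  simp only [Matrix.mul_assoc]

lemma Rmap_Jmap_mul (hV : OrthogonalIsometries V) (hW : OrthogonalIsometries W) {ρ : Mat m}
    (hρ : IsBlockDiag W ρ) (X : Mat n) : Rmap V W (Jmap V W ρ * X) = ρ * Jstar V W X := by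
  rw [Rmap, Jstar, Matrix.mul_sum]
  refine Finset.sum_congr rfl fun k _ => ?_
  have hJ : (V k)ᴴ * (Jmap V W ρ * X) * V k = ((dG k : ℂ))⁻¹ •
      ((((W k)ᴴ * ρ * W k) ⊗ₖ (1 : Matrix (Fin (dG k)) (Fin (dG k)) ℂ)) * ((V k)ᴴ * X * V k)) := by
    rw [Jmap, ← Matrix.mul_assoc, hV.conjTranspose_mul_sum_conj, Matrix.kronecker_smul]
    simp only [Matrix.mul_assoc, Matrix.smul_mul]
  rw [hJ, ptrG_smul, ptrG_kronecker_one_mul, Matrix.mul_smul, Matrix.smul_mul, Matrix.mul_smul,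
    ← Matrix.mul_assoc (W k), ← hρ.mul_eq hW]
  simp only [Matrix.mul_assoc]

variable (V W) in
def reductionKraus (x : (k : Fin K) × Fin (dG k)) : Matrix (Fin m) (Fin n) ℂ :=
  W x.1 * (kronUnit (dF x.1) x.2)ᴴ * (V x.1)ᴴ

variable (V W) in
def injectionKraus (x : (k : Fin K) × Fin (dG k)) : Matrix (Fin n) (Fin m) ℂ :=
  ((Real.sqrt (dG x.1) : ℂ))⁻¹ • (reductionKraus V W x)ᴴ

lemma Rmap_eq_sum_reductionKraus (X : Mat n) :
    Rmap V W X = ∑ x, reductionKraus V W x * X * (reductionKraus V W x)ᴴ := by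
  rw [Rmap, ← Finset.univ_sigma_univ, Finset.sum_sigma]
  refine Finset.sum_congr rfl fun k _ => ?_
  rw [ptrG_eq_sum_kronUnit, Matrix.mul_sum, Matrix.sum_mul]
  simp only [reductionKraus, Matrix.conjTranspose_mul, Matrix.conjTranspose_conjTranspose,
    Matrix.mul_assoc]

lemma Jmap_eq_sum_injectionKraus (ρ : Mat m) :
    Jmap V W ρ = ∑ x, injectionKraus V W x * ρ * (injectionKraus V W x)ᴴ := by
  rw [Jmap, ← Finset.univ_sigma_univ, Finset.sum_sigma]
  refine Finset.sum_congr rfl fun k _ => ?_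
  rw [Matrix.kronecker_smul, kronecker_one_eq_sum_kronUnit, Finset.smul_sum, Matrix.mul_sum,
    Matrix.sum_mul]
  refine Finset.sum_congr rfl fun g _ => ?_
  simp only [injectionKraus, reductionKraus, Matrix.conjTranspose_smul, Matrix.conjTranspose_mul,
    Matrix.conjTranspose_conjTranspose, Matrix.mul_smul, Matrix.smul_mul, smul_smul,
    Complex.star_def, map_inv₀, Complex.conj_ofReal, ofReal_sqrt_inv_mul_self, Matrix.mul_assoc]

lemma Jstar_eq_sum_injectionKraus (X : Mat n) :
    Jstar V W X = ∑ x, (injectionKraus V W x)ᴴ * X * injectionKraus V W x := by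
  rw [Jstar, ← Finset.univ_sigma_univ, Finset.sum_sigma]
  refine Finset.sum_congr rfl fun k _ => ?_
  rw [ptrG_eq_sum_kronUnit, Matrix.mul_sum, Matrix.sum_mul, Finset.smul_sum]
  refine Finset.sum_congr rfl fun g _ => ?_
  simp only [injectionKraus, reductionKraus, Matrix.conjTranspose_smul, Matrix.conjTranspose_mul,
    Matrix.conjTranspose_conjTranspose, Matrix.mul_smul, Matrix.smul_mul, smul_smul,
    Complex.star_def, map_inv₀, Complex.conj_ofReal, ofReal_sqrt_inv_mul_self, Matrix.mul_assoc]

lemma sum_conjTranspose_reductionKraus_mul_self (hV : ∑ k, V k * (V k)ᴴ = 1)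
    (hW : ∀ k, (W k)ᴴ * W k = 1) :
    ∑ x, (reductionKraus V W x)ᴴ * reductionKraus V W x = 1 := by
  rw [← Finset.univ_sigma_univ, Finset.sum_sigma, ← hV]
  refine Finset.sum_congr rfl fun k _ => ?_
  simp only [reductionKraus, Matrix.conjTranspose_mul, Matrix.conjTranspose_conjTranspose,
    Matrix.mul_assoc]
  simp only [← Matrix.mul_assoc (W k)ᴴ, hW, Matrix.one_mul]
  calc _ = V k * (∑ g : Fin (dG k), kronUnit (dF k) g * (kronUnit (dF k) g)ᴴ) * (V k)ᴴ := by
        simp only [Matrix.mul_sum, Matrix.sum_mul, Matrix.mul_assoc]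
    _ = V k * (V k)ᴴ := by rw [sum_kronUnit_mul_conjTranspose, Matrix.mul_one]

lemma Rmap_add (X Y : Mat n) : Rmap V W (X + Y) = Rmap V W X + Rmap V W Y := by
  simp only [Rmap_eq_sum_reductionKraus, Matrix.mul_add, Matrix.add_mul, Finset.sum_add_distrib]

lemma Rmap_sub (X Y : Mat n) : Rmap V W (X - Y) = Rmap V W X - Rmap V W Y := by
  simp only [Rmap_eq_sum_reductionKraus, Matrix.mul_sub, Matrix.sub_mul, Finset.sum_sub_distrib]

lemma Rmap_smul (c : ℂ) (X : Mat n) : Rmap V W (c • X) = c • Rmap V W X := by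
  simp only [Rmap_eq_sum_reductionKraus, Matrix.mul_smul, Matrix.smul_mul, Finset.smul_sum]

lemma Rmap_sum {ι : Type*} (s : Finset ι) (X : ι → Mat n) :
    Rmap V W (∑ i ∈ s, X i) = ∑ i ∈ s, Rmap V W (X i) := by
  simp only [Rmap_eq_sum_reductionKraus, Matrix.mul_sum, Matrix.sum_mul]
  exact Finset.sum_comm

lemma conjTranspose_Jstar (X : Mat n) : (Jstar V W X)ᴴ = Jstar V W Xᴴ := by
  simp only [Jstar_eq_sum_injectionKraus, Matrix.conjTranspose_sum, Matrix.conjTranspose_mul,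
    Matrix.conjTranspose_conjTranspose, Matrix.mul_assoc]

lemma Rmap_dissip_Jmap_of_kraus (hV : OrthogonalIsometries V) (hW : OrthogonalIsometries W)
    {ρ : Mat m} (hρ : IsBlockDiag W ρ) {ι : Type*} (s : Finset ι) (C : Mat n) (Ks : ι → Mat m)
    (hjump : Rmap V W (C * Jmap V W ρ * Cᴴ) = ∑ i ∈ s, Ks i * ρ * (Ks i)ᴴ)
    (hnorm : ∑ i ∈ s, (Ks i)ᴴ * Ks i = Jstar V W (Cᴴ * C)) :
    Rmap V W (dissip C (Jmap V W ρ)) = ∑ i ∈ s, dissip (Ks i) ρ := by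
  rw [dissip, Rmap_sub, Rmap_smul, Rmap_add, hjump, Rmap_mul_Jmap hV hW hρ,
    Rmap_Jmap_mul hV hW hρ, ← hnorm, Matrix.sum_mul, Matrix.mul_sum, ← Finset.sum_add_distrib,
    Finset.smul_sum, ← Finset.sum_sub_distrib]
  rfl

lemma Rmap_conj_Jmap_eq_sum_kraus (C : Mat n) (ρ : Mat m) :
    Rmap V W (C * Jmap V W ρ * Cᴴ) = ∑ x : ((k : Fin K) × Fin (dG k)) × ((k : Fin K) × Fin (dG k)),
      (reductionKraus V W x.1 * C * injectionKraus V W x.2) * ρ *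
        (reductionKraus V W x.1 * C * injectionKraus V W x.2)ᴴ := by
  rw [Rmap_eq_sum_reductionKraus, Jmap_eq_sum_injectionKraus, Fintype.sum_prod_type]
  simp only [Matrix.mul_sum, Matrix.sum_mul, Matrix.conjTranspose_mul, Matrix.mul_assoc]

lemma sum_conjTranspose_kraus_mul_self (hVcomplete : ∑ k, V k * (V k)ᴴ = 1)
    (hW : ∀ k, (W k)ᴴ * W k = 1) (C : Mat n) :
    ∑ x : ((k : Fin K) × Fin (dG k)) × ((k : Fin K) × Fin (dG k)),
      (reductionKraus V W x.1 * C * injectionKraus V W x.2)ᴴ *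
        (reductionKraus V W x.1 * C * injectionKraus V W x.2) = Jstar V W (Cᴴ * C) := by
  rw [Jstar_eq_sum_injectionKraus, Fintype.sum_prod_type, Finset.sum_comm]
  refine Finset.sum_congr rfl fun y _ => ?_
  calc _ = (injectionKraus V W y)ᴴ * Cᴴ *
          (∑ x, (reductionKraus V W x)ᴴ * reductionKraus V W x) * C * injectionKraus V W y := by
        simp only [Matrix.mul_sum, Matrix.sum_mul, Matrix.conjTranspose_mul, Matrix.mul_assoc]
    _ = _ := by
        rw [sum_conjTranspose_reductionKraus_mul_self hVcomplete hW, Matrix.mul_one]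
        simp only [Matrix.mul_assoc]

end Reduction

section ReducedKraus

variable {V : ∀ k : Fin K, Matrix (Fin n) (Fin (dF k) × Fin (dG k)) ℂ}
  {W : ∀ k : Fin K, Matrix (Fin m) (Fin (dF k)) ℂ} {d : ℕ}
  {LF : ∀ j k : Fin K, Fin d → Matrix (Fin (dF j)) (Fin (dF k)) ℂ}
  {GG : ∀ j k : Fin K, Fin d → Matrix (Fin (dG j)) (Fin (dG k)) ℂ}

lemma sum_Icc_sum_sum_ite_sub_eq {M : Type*} [AddCommMonoid M] (f : Fin K → Fin K → M) :
    ∑ e ∈ Finset.Icc (-(K : ℤ) + 1) ((K : ℤ) - 1), ∑ j : Fin K, ∑ k : Fin K,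
      (if (k : ℤ) - (j : ℤ) = e then f j k else 0) = ∑ j, ∑ k, f j k := by
  rw [Finset.sum_comm]
  refine Finset.sum_congr rfl fun j _ => ?_
  rw [Finset.sum_comm]
  refine Finset.sum_congr rfl fun k _ => ?_
  rw [Finset.sum_ite_eq, if_pos (Finset.mem_Icc.mpr (by omega))]

lemma redKraus_eq_sum_ite (ℓ : Fin d) (e : ℤ) :
    redKraus dG W LF ℓ e = ∑ j : Fin K, ∑ k : Fin K, if (k : ℤ) - (j : ℤ) = e then
      W j * (((Real.sqrt (dG k) : ℂ))⁻¹ • LF j k ℓ) * (W k)ᴴ else 0 := by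
  simp only [redKraus, Matrix.mul_smul, Matrix.smul_mul]

lemma redKraus_mul_mul_conjTranspose (hW : OrthogonalIsometries W) {ρ : Mat m}
    (hρ : IsBlockDiag W ρ) (ℓ : Fin d) (e : ℤ) :
    redKraus dG W LF ℓ e * ρ * (redKraus dG W LF ℓ e)ᴴ =
      ∑ j : Fin K, ∑ k : Fin K, if (k : ℤ) - (j : ℤ) = e then ((dG k : ℂ))⁻¹ •
        (W j * (LF j k ℓ * ((W k)ᴴ * ρ * W k) * (LF j k ℓ)ᴴ) * (W j)ᴴ) else 0 := by
  conv_lhs => rw [hρ.eq_sum_blocks, redKraus_eq_sum_ite]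
  rw [hW.sum_ite_conj_mul_sum_conj_mul_conjTranspose fun i i' k h h' => Fin.ext (by omega)]
  refine Finset.sum_congr rfl fun j _ => Finset.sum_congr rfl fun k _ => ?_
  split_ifs
  · simp only [Matrix.conjTranspose_smul, Matrix.smul_mul, Matrix.mul_smul, smul_smul,
      Complex.star_def, map_inv₀, Complex.conj_ofReal, ofReal_sqrt_inv_mul_self]
  · rfl

lemma conjTranspose_redKraus_mul_self (hW : OrthogonalIsometries W) (ℓ : Fin d) (e : ℤ) :
    (redKraus dG W LF ℓ e)ᴴ * redKraus dG W LF ℓ e =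
      ∑ j : Fin K, ∑ k : Fin K, if (k : ℤ) - (j : ℤ) = e then ((dG k : ℂ))⁻¹ •
        (W k * ((LF j k ℓ)ᴴ * LF j k ℓ) * (W k)ᴴ) else 0 := by
  rw [redKraus_eq_sum_ite,
    hW.conjTranspose_sum_ite_conj_mul_self fun j k k' h h' => Fin.ext (by omega)]
  refine Finset.sum_congr rfl fun j _ => Finset.sum_congr rfl fun k _ => ?_
  split_ifs
  · simp only [Matrix.conjTranspose_smul, Matrix.smul_mul, Matrix.mul_smul, smul_smul,
      Complex.star_def, map_inv₀, Complex.conj_ofReal, ofReal_sqrt_inv_mul_self]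
  · rfl

variable {L : Mat n}

lemma conjTranspose_mul_mul_eq_sum_kronecker (hV : OrthogonalIsometries V)
    (hL : L = ∑ j, ∑ k, ∑ ℓ, V j * (LF j k ℓ ⊗ₖ GG j k ℓ) * (V k)ᴴ) (j k : Fin K) :
    (V j)ᴴ * L * V k = ∑ ℓ, LF j k ℓ ⊗ₖ GG j k ℓ := by
  have hL' : L = ∑ j, ∑ k, V j * (∑ ℓ, LF j k ℓ ⊗ₖ GG j k ℓ) * (V k)ᴴ := by
    simp only [hL, Matrix.mul_sum, Matrix.sum_mul]
  rw [hL', hV.conjTranspose_mul_sum_sum_mul]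

lemma Rmap_conj_Jmap_eq_sum_of_schmidt (hV : OrthogonalIsometries V)
    (hL : L = ∑ j, ∑ k, ∑ ℓ, V j * (LF j k ℓ ⊗ₖ GG j k ℓ) * (V k)ᴴ)
    (hS : ∀ j k, IsSchmidtFamily (LF j k) (GG j k)) (ρ : Mat m) :
    Rmap V W (L * Jmap V W ρ * Lᴴ) = ∑ j, ∑ k, ∑ ℓ, ((dG k : ℂ))⁻¹ •
      (W j * (LF j k ℓ * ((W k)ᴴ * ρ * W k) * (LF j k ℓ)ᴴ) * (W j)ᴴ) := by
  rw [Rmap]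
  refine Finset.sum_congr rfl fun j _ => ?_
  have hcompress : (V j)ᴴ * (L * Jmap V W ρ * Lᴴ) * V j = ∑ k, ((dG k : ℂ))⁻¹ •
      ((V j)ᴴ * L * V k * (((W k)ᴴ * ρ * W k) ⊗ₖ (1 : Matrix (Fin (dG k)) (Fin (dG k)) ℂ)) *
        ((V j)ᴴ * L * V k)ᴴ) := by
    simp only [Jmap, Matrix.kronecker_smul, Matrix.mul_sum, Matrix.sum_mul, Matrix.mul_smul,
      Matrix.smul_mul, Matrix.conjTranspose_mul, Matrix.conjTranspose_conjTranspose,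
      Matrix.mul_assoc]
  simp only [hcompress, conjTranspose_mul_mul_eq_sum_kronecker hV hL, ptrG_sum, ptrG_smul,
    (hS j _).ptrG_mul_kronecker_one_mul_conjTranspose]
  simp only [Matrix.mul_sum, Matrix.sum_mul, Matrix.mul_smul, Matrix.smul_mul, Finset.smul_sum]

lemma Jstar_conjTranspose_mul_self_eq_sum_of_schmidt (hV : OrthogonalIsometries V)
    (hVcomplete : ∑ k, V k * (V k)ᴴ = 1)
    (hL : L = ∑ j, ∑ k, ∑ ℓ, V j * (LF j k ℓ ⊗ₖ GG j k ℓ) * (V k)ᴴ)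
    (hS : ∀ j k, IsSchmidtFamily (LF j k) (GG j k)) :
    Jstar V W (Lᴴ * L) = ∑ j, ∑ k, ∑ ℓ, ((dG k : ℂ))⁻¹ •
      (W k * ((LF j k ℓ)ᴴ * LF j k ℓ) * (W k)ᴴ) := by
  rw [Jstar, Finset.sum_comm]
  refine Finset.sum_congr rfl fun k _ => ?_
  have hcompress : (V k)ᴴ * (Lᴴ * L) * V k = ∑ j, ((V j)ᴴ * L * V k)ᴴ * ((V j)ᴴ * L * V k) := by
    conv_lhs => rw [← Matrix.mul_one Lᴴ, ← hVcomplete]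
    simp only [Matrix.mul_sum, Matrix.sum_mul, Matrix.conjTranspose_mul,
      Matrix.conjTranspose_conjTranspose, Matrix.mul_assoc]
  simp only [hcompress, conjTranspose_mul_mul_eq_sum_kronecker hV hL, ptrG_sum,
    (hS _ k).ptrG_conjTranspose_mul_self]
  simp only [Matrix.mul_sum, Matrix.sum_mul, Finset.smul_sum]

lemma Rmap_conj_Jmap_eq_sum_redKraus (hV : OrthogonalIsometries V) (hW : OrthogonalIsometries W)
    (hL : L = ∑ j, ∑ k, ∑ ℓ, V j * (LF j k ℓ ⊗ₖ GG j k ℓ) * (V k)ᴴ)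
    (hS : ∀ j k, IsSchmidtFamily (LF j k) (GG j k)) {ρ : Mat m} (hρ : IsBlockDiag W ρ) :
    Rmap V W (L * Jmap V W ρ * Lᴴ) =
      ∑ p ∈ Finset.Icc (-(K : ℤ) + 1) ((K : ℤ) - 1) ×ˢ Finset.univ,
        redKraus dG W LF p.2 p.1 * ρ * (redKraus dG W LF p.2 p.1)ᴴ := by
  rw [Finset.sum_product, Finset.sum_comm]
  simp only [redKraus_mul_mul_conjTranspose hW hρ, sum_Icc_sum_sum_ite_sub_eq]
  rw [Rmap_conj_Jmap_eq_sum_of_schmidt hV hL hS]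
  exact (Finset.sum_congr rfl fun _ _ => Finset.sum_comm).trans Finset.sum_comm

lemma sum_conjTranspose_redKraus_mul_self (hV : OrthogonalIsometries V)
    (hVcomplete : ∑ k, V k * (V k)ᴴ = 1) (hW : OrthogonalIsometries W)
    (hL : L = ∑ j, ∑ k, ∑ ℓ, V j * (LF j k ℓ ⊗ₖ GG j k ℓ) * (V k)ᴴ)
    (hS : ∀ j k, IsSchmidtFamily (LF j k) (GG j k)) :
    ∑ p ∈ Finset.Icc (-(K : ℤ) + 1) ((K : ℤ) - 1) ×ˢ Finset.univ,
        (redKraus dG W LF p.2 p.1)ᴴ * redKraus dG W LF p.2 p.1 = Jstar V W (Lᴴ * L) := by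
  rw [Finset.sum_product, Finset.sum_comm]
  simp only [conjTranspose_redKraus_mul_self hW, sum_Icc_sum_sum_ite_sub_eq]
  rw [Jstar_conjTranspose_mul_self_eq_sum_of_schmidt hV hVcomplete hL hS]
  exact Finset.sum_comm.trans (Finset.sum_congr rfl fun _ _ => Finset.sum_comm)

end ReducedKraus

lemma exists_gkls_eq {p : ℕ} (H : Mat p) {ι : Type*} [Fintype ι] (Ks : ι → Mat p) :
    ∃ (M : ℕ) (Ls : Fin M → Mat p), ∀ ρ,
      gkls H Ls ρ = (-Complex.I) • (H * ρ - ρ * H) + ∑ i, dissip (Ks i) ρ :=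
  ⟨Fintype.card ι, Ks ∘ (Fintype.equivFin ι).symm, fun ρ => by
    rw [← (Fintype.equivFin ι).symm.sum_comp]
    rfl⟩

section GKLS

variable {V : ∀ k : Fin K, Matrix (Fin n) (Fin (dF k) × Fin (dG k)) ℂ}
  {W : ∀ k : Fin K, Matrix (Fin m) (Fin (dF k)) ℂ}

lemma Rmap_dissip_Jmap (hV : OrthogonalIsometries V) (hW : OrthogonalIsometries W)
    (hVcomplete : ∑ k, V k * (V k)ᴴ = 1) {ρ : Mat m} (hρ : IsBlockDiag W ρ) (C : Mat n) :
    Rmap V W (dissip C (Jmap V W ρ)) =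
      ∑ x : ((k : Fin K) × Fin (dG k)) × ((k : Fin K) × Fin (dG k)),
        dissip (reductionKraus V W x.1 * C * injectionKraus V W x.2) ρ :=
  Rmap_dissip_Jmap_of_kraus hV hW hρ _ C _ (Rmap_conj_Jmap_eq_sum_kraus C ρ)
    (sum_conjTranspose_kraus_mul_self hVcomplete hW.isometry C)

lemma Rmap_gkls_Jmap (hV : OrthogonalIsometries V) (hW : OrthogonalIsometries W)
    (hVcomplete : ∑ k, V k * (V k)ᴴ = 1) {ρ : Mat m} (hρ : IsBlockDiag W ρ) {M : ℕ}
    (H₀ : Mat n) (Ls : Fin M → Mat n) :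
    Rmap V W (gkls H₀ Ls (Jmap V W ρ)) =
      (-Complex.I) • (Jstar V W H₀ * ρ - ρ * Jstar V W H₀) +
        ∑ p : Fin M × ((k : Fin K) × Fin (dG k)) × ((k : Fin K) × Fin (dG k)),
          dissip (reductionKraus V W p.2.1 * Ls p.1 * injectionKraus V W p.2.2) ρ := by
  rw [gkls, Rmap_add, Rmap_smul, Rmap_sub, Rmap_mul_Jmap hV hW hρ, Rmap_Jmap_mul hV hW hρ,
    Rmap_sum, Fintype.sum_prod_type]
  simp only [Rmap_dissip_Jmap hV hW hVcomplete hρ]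

end GKLS

theorem reduced_dissipator_and_GKLS_general
    (V : ∀ k : Fin K, Matrix (Fin n) (Fin (dF k) × Fin (dG k)) ℂ)
    (W : ∀ k : Fin K, Matrix (Fin m) (Fin (dF k)) ℂ)
    (hVortho : ∀ k, (V k)ᴴ * V k = 1)
    (hVdisj : ∀ j k, j ≠ k → (V j)ᴴ * V k = 0)
    (hVcomplete : ∑ k : Fin K, V k * (V k)ᴴ = 1)
    (hWortho : ∀ k, (W k)ᴴ * W k = 1)
    (hWdisj : ∀ j k, j ≠ k → (W j)ᴴ * W k = 0)
    {d : ℕ} (L : Mat n)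
    (LF : ∀ j k : Fin K, Fin d → Matrix (Fin (dF j)) (Fin (dF k)) ℂ)
    (GG : ∀ j k : Fin K, Fin d → Matrix (Fin (dG j)) (Fin (dG k)) ℂ)
    (hL : L = ∑ j : Fin K, ∑ k : Fin K, ∑ ℓ : Fin d,
      V j * ((LF j k ℓ) ⊗ₖ (GG j k ℓ)) * (V k)ᴴ)
    (hGorth : ∀ (j k : Fin K) (ℓ f : Fin d), ℓ ≠ f → ((GG j k ℓ)ᴴ * GG j k f).trace = 0)
    (hGnorm : ∀ (j k : Fin K) (ℓ : Fin d), GG j k ℓ ≠ 0 → ((GG j k ℓ)ᴴ * GG j k ℓ).trace = 1)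
    (hpad : ∀ (j k : Fin K) (ℓ : Fin d), GG j k ℓ = 0 → LF j k ℓ = 0) :
    -- the reduced dissipator is a sum of dissipators of the reduced Kraus operators
    (∀ ρ : Mat m, IsBlockDiag W ρ →
      Rmap V W (dissip L (Jmap V W ρ)) =
        ∑ e ∈ Finset.Icc (-(K : ℤ) + 1) ((K : ℤ) - 1), ∑ ℓ : Fin d,
          dissip (redKraus dG W LF ℓ e) ρ) ∧
    -- in particular, the reduction of any GKLS generator is again a GKLS generator
    (∀ (M : ℕ) (H₀ : Mat n) (Ls : Fin M → Mat n), H₀ᴴ = H₀ →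
      ∃ (M' : ℕ) (Hr : Mat m) (Ks : Fin M' → Mat m), Hrᴴ = Hr ∧
        ∀ ρ : Mat m, IsBlockDiag W ρ →
          Rmap V W (gkls H₀ Ls (Jmap V W ρ)) = gkls Hr Ks ρ) := by
  have hV : OrthogonalIsometries V := ⟨hVortho, hVdisj⟩
  have hW : OrthogonalIsometries W := ⟨hWortho, hWdisj⟩
  have hS : ∀ j k, IsSchmidtFamily (LF j k) (GG j k) := fun j k =>
    ⟨hGorth j k, hGnorm j k, hpad j k⟩
  refine ⟨fun ρ hρ => ?_, fun M H₀ Ls hH => ?_⟩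
  · rw [← Finset.sum_product']
    exact Rmap_dissip_Jmap_of_kraus hV hW hρ _ L _ (Rmap_conj_Jmap_eq_sum_redKraus hV hW hL hS hρ)
      (sum_conjTranspose_redKraus_mul_self hV hVcomplete hW hL hS)
  · obtain ⟨M', Ks, hKs⟩ := exists_gkls_eq (Jstar V W H₀)
      fun p : Fin M × ((k : Fin K) × Fin (dG k)) × ((k : Fin K) × Fin (dG k)) =>
        reductionKraus V W p.2.1 * Ls p.1 * injectionKraus V W p.2.2
    refine ⟨M', Jstar V W H₀, Ks, by rw [conjTranspose_Jstar, hH], fun ρ hρ => ?_⟩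
    rw [hKs, Rmap_gkls_Jmap hV hW hVcomplete hρ]

theorem reduced_dissipator_and_GKLS
    (V : ∀ k : Fin K, Matrix (Fin n) (Fin (dF k) × Fin (dG k)) ℂ)
    (W : ∀ k : Fin K, Matrix (Fin m) (Fin (dF k)) ℂ)
    (hVortho : ∀ k, (V k)ᴴ * V k = 1)
    (hVdisj : ∀ j k, j ≠ k → (V j)ᴴ * V k = 0)
    (hVcomplete : ∑ k : Fin K, V k * (V k)ᴴ = 1)
    (hWortho : ∀ k, (W k)ᴴ * W k = 1)
    (hWdisj : ∀ j k, j ≠ k → (W j)ᴴ * W k = 0)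
    (hWcomplete : ∑ k : Fin K, W k * (W k)ᴴ = 1)
    (hdG : ∀ k, 0 < dG k)
    {d : ℕ} (L : Mat n)
    (LF : ∀ j k : Fin K, Fin d → Matrix (Fin (dF j)) (Fin (dF k)) ℂ)
    (GG : ∀ j k : Fin K, Fin d → Matrix (Fin (dG j)) (Fin (dG k)) ℂ)
    (hL : L = ∑ j : Fin K, ∑ k : Fin K, ∑ ℓ : Fin d,
      V j * ((LF j k ℓ) ⊗ₖ (GG j k ℓ)) * (V k)ᴴ)
    (hGorth : ∀ (j k : Fin K) (ℓ f : Fin d), ℓ ≠ f → ((GG j k ℓ)ᴴ * GG j k f).trace = 0)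
    (hGnorm : ∀ (j k : Fin K) (ℓ : Fin d), GG j k ℓ ≠ 0 → ((GG j k ℓ)ᴴ * GG j k ℓ).trace = 1)
    (hpad : ∀ (j k : Fin K) (ℓ : Fin d), GG j k ℓ = 0 → LF j k ℓ = 0) :
    -- the reduced dissipator is a sum of dissipators of the reduced Kraus operators
    (∀ ρ : Mat m, IsBlockDiag W ρ →
      Rmap V W (dissip L (Jmap V W ρ)) =
        ∑ e ∈ Finset.Icc (-(K : ℤ) + 1) ((K : ℤ) - 1), ∑ ℓ : Fin d,
          dissip (redKraus dG W LF ℓ e) ρ) ∧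
    -- in particular, the reduction of any GKLS generator is again a GKLS generator
    (∀ (M : ℕ) (H₀ : Mat n) (Ls : Fin M → Mat n), H₀ᴴ = H₀ →
      ∃ (M' : ℕ) (Hr : Mat m) (Ks : Fin M' → Mat m), Hrᴴ = Hr ∧
        ∀ ρ : Mat m, IsBlockDiag W ρ →
          Rmap V W (gkls H₀ Ls (Jmap V W ρ)) = gkls Hr Ks ρ) :=
  reduced_dissipator_and_GKLS_general V W hVortho hVdisj hVcomplete hWortho hWdisj L LF GG hL hGorth
    hGnorm hpad

end
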